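/- Let A be an n×n pairwise comparison matrix (n ≥ 3) and w a positive weight vector that is inefficient for A. Then there exists a positive weight vector w* that is efficient for A and internally dominates w. -/

import Mathlib

/-!
Minimize the total deviation `F x = ∑ i j, |A i j - x i / x j|` over the positive vectors all of
whose ratios lie between those of `A` and of `w`. Fixing the scale makes this region compact, so a
minimizer `w*` exists. If some `w'` dominated `w*`, then for small `t > 0` the vector
`(1 - t) w* + t w'` would still lie in the region (its ratios are mediants of those of `w*` and
`w'`, and start at those of `w*`) while having strictly smaller `F`; hence `w*` is efficient.
The same construction applied to `w` and a vector dominating it gives `F w* < F w`, so `w*` differs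
from `w` in some ratio, which makes the internal dominance strict.
-/

open Set Filter Topology
open scoped Interval

theorem abs_sub_lt_of_mem_uIcc_of_ne {a b c : ℝ} (h : c ∈ [[a, b]]) (hne : c ≠ b) :
    |c - a| < |b - a| := by
  rw [← sq_lt_sq]
  rcases mem_uIcc.1 h with ⟨hac, hcb⟩ | ⟨hbc, hca⟩
  · nlinarith [lt_of_le_of_ne hcb hne]
  · nlinarith [lt_of_le_of_ne hbc hne.symm]

theorem div_mem_uIcc_iff {a b p q : ℝ} (hq : 0 < q) :
    p / q ∈ [[a, b]] ↔ min a b * q ≤ p ∧ p ≤ max a b * q := by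
  rw [uIcc, mem_Icc, le_div_iff₀ hq, div_le_iff₀ hq]

theorem mediant_mem_uIcc {p q p' q' s t : ℝ} (hq : 0 < q) (hq' : 0 < q') (hs : 0 ≤ s)
    (ht : 0 < t) : (s * p + t * p') / (s * q + t * q') ∈ [[p / q, p' / q']] := by
  have hD : 0 < s * q + t * q' := by positivity
  rw [← segment_eq_uIcc]
  refine ⟨s * q / (s * q + t * q'), t * q' / (s * q + t * q'), by positivity, by positivity,
    by field_simp, ?_⟩
  simp only [smul_eq_mul]
  field_simp

theorem mediant_eq_left_iff {p q p' q' s t : ℝ} (hq : 0 < q) (hq' : 0 < q') (hs : 0 ≤ s)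
    (ht : 0 < t) : (s * p + t * p') / (s * q + t * q') = p / q ↔ p' / q' = p / q := by
  have hD : 0 < s * q + t * q' := by positivity
  rw [div_eq_div_iff hD.ne' hq.ne', div_eq_div_iff hq'.ne' hq.ne']
  constructor
  · intro h
    exact mul_left_cancel₀ ht.ne' (by linear_combination h)
  · intro h
    linear_combination t * h

theorem eventually_mem_uIcc_of_tendsto {α : Type*} {l : Filter α} {f : α → ℝ} {a r ρ : ℝ}
    (hf : Tendsto f l (𝓝 r)) (hfρ : ∀ᶠ t in l, f t ∈ [[r, ρ]]) (hρ : |a - ρ| ≤ |a - r|) :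
    ∀ᶠ t in l, f t ∈ [[a, r]] := by
  rcases lt_trichotomy a r with har | rfl | hra
  · have hρr : ρ ≤ r := by
      rw [abs_of_neg (sub_neg.2 har)] at hρ
      linarith [neg_abs_le (a - ρ)]
    filter_upwards [hf.eventually (eventually_gt_nhds har), hfρ] with t hat hft
    rw [uIcc_of_ge hρr] at hft
    rw [uIcc_of_le har.le]
    exact ⟨hat.le, hft.2⟩
  · have hρa : ρ = a := by simpa [sub_eq_zero, eq_comm] using hρ
    simpa [hρa] using hfρ
  · have hrρ : r ≤ ρ := by
      rw [abs_of_pos (sub_pos.2 hra)] at hρ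
      linarith [le_abs_self (a - ρ)]
    filter_upwards [hf.eventually (eventually_lt_nhds hra), hfρ] with t hat hft
    rw [uIcc_of_le hrρ] at hft
    rw [uIcc_of_ge hra.le]
    exact ⟨hft.1, hat.le⟩

variable {ι : Type*}

def Dominates (A : Matrix ι ι ℝ) (w' w : ι → ℝ) : Prop :=
  (∀ i, 0 < w' i) ∧ (∀ i j, |A i j - w' i / w' j| ≤ |A i j - w i / w j|) ∧
    ∃ k l, |A k l - w' k / w' l| < |A k l - w k / w l|

def InternallyDominates (A : Matrix ι ι ℝ) (w' w : ι → ℝ) : Prop :=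
  (∀ i j, (A i j ≤ w i / w j → A i j ≤ w' i / w' j ∧ w' i / w' j ≤ w i / w j) ∧
      (A i j ≥ w i / w j → A i j ≥ w' i / w' j ∧ w' i / w' j ≥ w i / w j)) ∧
    ∃ k l, (A k l ≤ w k / w l ∧ w' k / w' l < w k / w l) ∨
      (A k l ≥ w k / w l ∧ w' k / w' l > w k / w l)

def internalRegion (A : Matrix ι ι ℝ) (w : ι → ℝ) : Set (ι → ℝ) :=
  {x | (∀ i, 0 < x i) ∧ ∀ i j, x i / x j ∈ [[A i j, w i / w j]]}

variable {A : Matrix ι ι ℝ} {w x : ι → ℝ}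

theorem self_mem_internalRegion (hw : ∀ i, 0 < w i) : w ∈ internalRegion A w :=
  ⟨hw, fun _ _ => right_mem_uIcc⟩

theorem internalRegion_subset_of_mem (hx : x ∈ internalRegion A w) :
    internalRegion A x ⊆ internalRegion A w :=
  fun _ hy => ⟨hy.1, fun i j => uIcc_subset_uIcc_left (hx.2 i j) (hy.2 i j)⟩

theorem InternallyDominates.of_mem_internalRegion (hx : x ∈ internalRegion A w) {k l : ι}
    (hkl : x k / x l ≠ w k / w l) : InternallyDominates A x w := by
  refine ⟨fun i j => ⟨fun h => ?_, fun h => ?_⟩, k, l, ?_⟩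
  · have hij := hx.2 i j
    rw [uIcc_of_le h] at hij
    exact hij
  · have hij := hx.2 i j
    rw [uIcc_of_ge h] at hij
    exact ⟨hij.2, hij.1⟩
  · have hkl' := hx.2 k l
    rcases le_total (A k l) (w k / w l) with h | h
    · rw [uIcc_of_le h] at hkl'
      exact .inl ⟨h, lt_of_le_of_ne hkl'.2 hkl⟩
    · rw [uIcc_of_ge h] at hkl'
      exact .inr ⟨h, lt_of_le_of_ne hkl'.1 hkl.symm⟩

variable [Fintype ι]

noncomputable def ratioError (A : Matrix ι ι ℝ) (x : ι → ℝ) : ℝ :=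
  ∑ i, ∑ j, |A i j - x i / x j|

/-- The constraints of `internalRegion` with denominators cleared, so that the set is closed. -/
def internalSlice (A : Matrix ι ι ℝ) (w : ι → ℝ) : Set (ι → ℝ) :=
  {x | (∀ i, 0 ≤ x i) ∧
    (∀ i j, min (A i j) (w i / w j) * x j ≤ x i ∧ x i ≤ max (A i j) (w i / w j) * x j) ∧
    ∑ i, x i = ∑ i, w i}

theorem ratioError_lt_of_mem_internalRegion (hx : x ∈ internalRegion A w) {k l : ι}
    (hkl : x k / x l ≠ w k / w l) : ratioError A x < ratioError A w := by
  have hle : ∀ i j, |A i j - x i / x j| ≤ |A i j - w i / w j| := fun i j => by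
    simpa only [abs_sub_comm (A i j)] using abs_sub_left_of_mem_uIcc (hx.2 i j)
  have hlt : |A k l - x k / x l| < |A k l - w k / w l| := by
    simpa only [abs_sub_comm (A k l)] using abs_sub_lt_of_mem_uIcc_of_ne (hx.2 k l) hkl
  exact Finset.sum_lt_sum (fun i _ => Finset.sum_le_sum fun j _ => hle i j)
    ⟨k, Finset.mem_univ k, Finset.sum_lt_sum (fun j _ => hle k j) ⟨l, Finset.mem_univ l, hlt⟩⟩

theorem ratioError_smul {c : ℝ} (hc : c ≠ 0) (x : ι → ℝ) :
    ratioError A (c • x) = ratioError A x := by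
  simp only [ratioError, Pi.smul_apply, smul_eq_mul, mul_div_mul_left _ _ hc]

theorem continuousOn_ratioError (A : Matrix ι ι ℝ) :
    ContinuousOn (ratioError A) {x | ∀ i, 0 < x i} := by
  unfold ratioError
  fun_prop (disch := exact fun x hx => (hx _).ne')

theorem Dominates.exists_mem_internalRegion_ratioError_lt {w' : ι → ℝ} (h : Dominates A w' x)
    (hx : ∀ i, 0 < x i) : ∃ y ∈ internalRegion A x, ratioError A y < ratioError A x := by
  obtain ⟨hw', hle, k, l, hlt⟩ := h
  set y : ℝ → ι → ℝ := fun t i => (1 - t) * x i + t * w' i with hy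
  have hI : ∀ᶠ t in 𝓝[>] (0 : ℝ), t ∈ Ioo 0 1 := Ioo_mem_nhdsGT one_pos
  have hmediant : ∀ t ∈ Ioo (0 : ℝ) 1, ∀ i j, y t i / y t j ∈ [[x i / x j, w' i / w' j]] :=
    fun t ht i j => mediant_mem_uIcc (hx j) (hw' j) (sub_nonneg.2 ht.2.le) ht.1
  have hlim : ∀ i j, Tendsto (fun t => y t i / y t j) (𝓝[>] 0) (𝓝 (x i / x j)) := by
    intro i j
    have hcont : ContinuousAt (fun t => y t i / y t j) 0 :=
      ContinuousAt.div (by fun_prop) (by fun_prop) (by simp [hy, (hx j).ne'])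
    simpa [hy] using hcont.tendsto.mono_left nhdsWithin_le_nhds
  have hev : ∀ᶠ t in 𝓝[>] (0 : ℝ), t ∈ Ioo 0 1 ∧ ∀ i j, y t i / y t j ∈ [[A i j, x i / x j]] :=
    hI.and <| eventually_all.2 fun i => eventually_all.2 fun j =>
      eventually_mem_uIcc_of_tendsto (hlim i j) (hI.mono fun t ht => hmediant t ht i j) (hle i j)
  obtain ⟨t, ht, hyA⟩ := hev.exists
  have hpos : ∀ i, 0 < y t i := fun i =>
    add_pos (mul_pos (sub_pos.2 ht.2) (hx i)) (mul_pos ht.1 (hw' i))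
  have hkl : y t k / y t l ≠ x k / x l := by
    rw [Ne, mediant_eq_left_iff (hx l) (hw' l) (sub_nonneg.2 ht.2.le) ht.1]
    exact fun h => hlt.ne (by rw [h])
  exact ⟨y t, ⟨hpos, hyA⟩, ratioError_lt_of_mem_internalRegion ⟨hpos, hyA⟩ hkl⟩

theorem isCompact_internalSlice : IsCompact (internalSlice A w) := by
  have hbox : internalSlice A w ⊆ univ.pi fun _ => Icc 0 (∑ i, w i) := fun x ⟨hx0, _, hxs⟩ i _ =>
    ⟨hx0 i, hxs ▸ Finset.single_le_sum (fun j _ => hx0 j) (Finset.mem_univ i)⟩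
  refine (isCompact_univ_pi fun _ => isCompact_Icc).of_isClosed_subset ?_ hbox
  simp only [internalSlice, ofPred_and, ofPred_forall]
  refine (isClosed_iInter fun i => isClosed_le continuous_const (continuous_apply i)).inter
    ((isClosed_iInter fun i => isClosed_iInter fun j => ?_).inter
      (isClosed_eq (continuous_finsetSum _ fun i _ => continuous_apply i) continuous_const))
  exact (isClosed_le (by fun_prop) (by fun_prop)).inter (isClosed_le (by fun_prop) (by fun_prop))

theorem internalSlice_subset_internalRegion (hA : ∀ i j, 0 < A i j) (hw : ∀ i, 0 < w i) :
    internalSlice A w ⊆ internalRegion A w := by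
  rintro x ⟨hx0, hxb, hxs⟩
  have hpos : ∀ i, 0 < x i := fun i => by
    have hsum : ∑ _i : ι, (0 : ℝ) < ∑ i, x i := by
      rw [hxs, Finset.sum_const_zero]
      exact Finset.sum_pos (fun i _ => hw i) ⟨i, Finset.mem_univ i⟩
    obtain ⟨j, -, hj⟩ := Finset.exists_lt_of_sum_lt hsum
    exact (mul_pos (lt_min (hA i j) (div_pos (hw i) (hw j))) hj).trans_le (hxb i j).1
  exact ⟨hpos, fun i j => (div_mem_uIcc_iff (hpos j)).2 (hxb i j)⟩

theorem exists_pos_smul_mem_internalSlice [Nonempty ι] (hw : ∀ i, 0 < w i)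
    (hx : x ∈ internalRegion A w) : ∃ c : ℝ, 0 < c ∧ c • x ∈ internalSlice A w := by
  have hxs : 0 < ∑ i, x i := Finset.sum_pos (fun i _ => hx.1 i) Finset.univ_nonempty
  have hws : 0 < ∑ i, w i := Finset.sum_pos (fun i _ => hw i) Finset.univ_nonempty
  set c := (∑ i, w i) / ∑ i, x i
  have hc : 0 < c := div_pos hws hxs
  refine ⟨c, hc, fun i => (mul_pos hc (hx.1 i)).le, fun i j => ?_, ?_⟩
  · have hij := (div_mem_uIcc_iff (hx.1 j)).1 (hx.2 i j)
    simp only [Pi.smul_apply, smul_eq_mul, mul_left_comm _ c]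
    exact ⟨mul_le_mul_of_nonneg_left hij.1 hc.le, mul_le_mul_of_nonneg_left hij.2 hc.le⟩
  · simp only [Pi.smul_apply, smul_eq_mul, ← Finset.mul_sum, c]
    field_simp

theorem exists_isMinOn_ratioError_internalRegion [Nonempty ι] (hA : ∀ i j, 0 < A i j)
    (hw : ∀ i, 0 < w i) :
    ∃ ws ∈ internalRegion A w, IsMinOn (ratioError A) (internalRegion A w) ws := by
  have hslice := internalSlice_subset_internalRegion hA hw
  obtain ⟨c, -, hcw⟩ := exists_pos_smul_mem_internalSlice hw (self_mem_internalRegion (A := A) hw)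
  obtain ⟨ws, hws, hmin⟩ := isCompact_internalSlice.exists_isMinOn ⟨_, hcw⟩
    ((continuousOn_ratioError A).mono fun x hx => (hslice hx).1)
  refine ⟨ws, hslice hws, fun x hx => ?_⟩
  obtain ⟨c, hc, hcx⟩ := exists_pos_smul_mem_internalSlice hw hx
  calc ratioError A ws ≤ ratioError A (c • x) := hmin hcx
    _ = ratioError A x := ratioError_smul hc.ne' x

theorem inefficient_has_efficient_internal_dominator_general
    {n : ℕ} (hn : 3 ≤ n) (A : Matrix (Fin n) (Fin n) ℝ)
    (hApos : ∀ i j, 0 < A i j)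
    (w : Fin n → ℝ) (hw : ∀ i, 0 < w i)
    (hineff : ∃ w' : Fin n → ℝ, (∀ i, 0 < w' i) ∧
        (∀ i j, |A i j - w' i / w' j| ≤ |A i j - w i / w j|) ∧
        (∃ k l, |A k l - w' k / w' l| < |A k l - w k / w l|)) :
    ∃ ws : Fin n → ℝ, (∀ i, 0 < ws i) ∧
      -- ws is efficient for A
      (¬ ∃ w' : Fin n → ℝ, (∀ i, 0 < w' i) ∧
        (∀ i j, |A i j - w' i / w' j| ≤ |A i j - ws i / ws j|) ∧
        (∃ k l, |A k l - w' k / w' l| < |A k l - ws k / ws l|)) ∧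
      -- ws internally dominates w
      (∀ i j, (A i j ≤ w i / w j → A i j ≤ ws i / ws j ∧ ws i / ws j ≤ w i / w j) ∧
              (A i j ≥ w i / w j → A i j ≥ ws i / ws j ∧ ws i / ws j ≥ w i / w j)) ∧
      (∃ k l, (A k l ≤ w k / w l ∧ ws k / ws l < w k / w l) ∨
              (A k l ≥ w k / w l ∧ ws k / ws l > w k / w l)) := by
  have : Nonempty (Fin n) := ⟨⟨0, by omega⟩⟩
  obtain ⟨ws, hws, hmin⟩ := exists_isMinOn_ratioError_internalRegion hApos hw
  have hefficient : ¬ ∃ w', Dominates A w' ws := fun ⟨w', hw'⟩ => by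
    obtain ⟨y, hy, hlt⟩ := hw'.exists_mem_internalRegion_ratioError_lt hws.1
    exact (hmin (internalRegion_subset_of_mem hws hy)).not_gt hlt
  obtain ⟨w₀, hw₀⟩ : ∃ w₀, Dominates A w₀ w := hineff
  obtain ⟨y, hy, hlt⟩ := hw₀.exists_mem_internalRegion_ratioError_lt hw
  obtain ⟨k, l, hkl⟩ : ∃ k l, ws k / ws l ≠ w k / w l := by
    by_contra! h
    have hlt' := (hmin hy).trans_lt hlt
    simp only [ratioError, h, lt_self_iff_false] at hlt'
  exact ⟨ws, hws.1, hefficient, InternallyDominates.of_mem_internalRegion hws hkl⟩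

/-- If `w` is inefficient, then there is an efficient positive weight
vector `w*` that internally dominates `w`. -/
theorem inefficient_has_efficient_internal_dominator
    {n : ℕ} (hn : 3 ≤ n) (A : Matrix (Fin n) (Fin n) ℝ)
    (hApos : ∀ i j, 0 < A i j) (hArec : ∀ i j, A i j = (A j i)⁻¹)
    (w : Fin n → ℝ) (hw : ∀ i, 0 < w i)
    (hineff : ∃ w' : Fin n → ℝ, (∀ i, 0 < w' i) ∧
        (∀ i j, |A i j - w' i / w' j| ≤ |A i j - w i / w j|) ∧
        (∃ k l, |A k l - w' k / w' l| < |A k l - w k / w l|)) :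
    ∃ ws : Fin n → ℝ, (∀ i, 0 < ws i) ∧
      -- ws is efficient for A
      (¬ ∃ w' : Fin n → ℝ, (∀ i, 0 < w' i) ∧
        (∀ i j, |A i j - w' i / w' j| ≤ |A i j - ws i / ws j|) ∧
        (∃ k l, |A k l - w' k / w' l| < |A k l - ws k / ws l|)) ∧
      -- ws internally dominates w
      (∀ i j, (A i j ≤ w i / w j → A i j ≤ ws i / ws j ∧ ws i / ws j ≤ w i / w j) ∧
              (A i j ≥ w i / w j → A i j ≥ ws i / ws j ∧ ws i / ws j ≥ w i / w j)) ∧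
      (∃ k l, (A k l ≤ w k / w l ∧ ws k / ws l < w k / w l) ∨
              (A k l ≥ w k / w l ∧ ws k / ws l > w k / w l)) :=
  inefficient_has_efficient_internal_dominator_general hn A hApos w hw hineff
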